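/- arXiv:1004.2468 — 3 statements merged into one kernel-verified Lean document; each statement's English description precedes it below -/
import Mathlib

section
/- Let ρ, σ' be qubit states with Bloch vectors r, s and priors π₀, π₁ summing to 1. If ‖π₀ r − π₁ s‖ < |π₀ − π₁| then the Hermitian matrix π₀ρ − π₁σ' is positive semidefinite (when π₀ > π₁) or negative semidefinite (when π₀ < π₁); in particular its positive part is either 0 or the whole matrix, and the corresponding Helstrom projection is 0 or the identity. -/
open Matrix
open scoped ComplexOrder

/-- The Pauli matrices. -/
noncomputable def pauli : Fin 3 → Matrix (Fin 2) (Fin 2) ℂ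
  | 0 => !![0, 1; 1, 0]
  | 1 => !![0, -Complex.I; Complex.I, 0]
  | 2 => !![1, 0; 0, -1]

/-- `r·σ` for a real vector `r`. -/
noncomputable def dotPauli (r : Fin 3 → ℝ) : Matrix (Fin 2) (Fin 2) ℂ :=
  ∑ i, (r i : ℂ) • pauli i

/-- The qubit state with Bloch vector `r`. -/
noncomputable def qubitState (r : Fin 3 → ℝ) : Matrix (Fin 2) (Fin 2) ℂ :=
  (1/2 : ℂ) • (1 + dotPauli r)

/-- Euclidean norm on `Fin 3 → ℝ`. -/
noncomputable def norm3 (r : Fin 3 → ℝ) : ℝ := Real.sqrt (∑ i, r i ^ 2)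

/-!
Up to the factor `1/2`, `π₀ρ − π₁σ'` is `c • 1 + t·σ` with `c = π₀ − π₁` and `t = π₀r − π₁s`,
i.e. the Hermitian matrix `[[c + t₂, t₀ − i t₁], [t₀ + i t₁, c − t₂]]`. A Hermitian `2 × 2` matrix
with nonnegative diagonal and determinant is positive semidefinite (complete the square), and here
the determinant is `c² − ‖t‖²`, so `‖t‖ ≤ c` suffices. For `π₀ < π₁` apply this to
`−(π₀ρ − π₁σ') = π₁σ' − π₀ρ`.
-/

theorem Matrix.posSemidef_fin_two_of_normSq_le {a d : ℝ} {w : ℂ} (ha : 0 ≤ a) (hd : 0 ≤ d)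
    (hw : Complex.normSq w ≤ a * d) :
    !![(a : ℂ), star w; w, (d : ℂ)].PosSemidef := by
  refine .of_dotProduct_mulVec_nonneg ?_ fun x => ?_
  · ext i j
    fin_cases i <;> fin_cases j <;> simp
  · have hform : star x ⬝ᵥ (!![(a : ℂ), star w; w, (d : ℂ)] *ᵥ x) =
        star (x 0) * (a * x 0 + star w * x 1) + star (x 1) * (w * x 0 + d * x 1) := by
      simp [dotProduct, Fin.sum_univ_two, mulVec]
    rw [hform, Complex.le_def]
    obtain ⟨p, q⟩ := x 0
    obtain ⟨u, v⟩ := x 1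
    obtain ⟨α, β⟩ := w
    simp only [Complex.normSq_mk] at hw
    simp only [Complex.zero_re, Complex.zero_im, Complex.add_re, Complex.add_im, Complex.mul_re,
      Complex.mul_im, Complex.ofReal_re, Complex.ofReal_im, Complex.star_def, Complex.conj_re,
      Complex.conj_im]
    refine ⟨?_, by ring⟩
    rcases ha.eq_or_lt with rfl | ha
    · have hα : α = 0 := by nlinarith
      have hβ : β = 0 := by nlinarith
      subst hα hβ
      nlinarith [sq_nonneg u, sq_nonneg v]
    · -- completing the square in `x 0`
      refine (mul_nonneg_iff_of_pos_left ha).1 ?_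
      nlinarith [sq_nonneg (a * p + α * u + β * v), sq_nonneg (a * q + α * v - β * u),
        mul_nonneg (sub_nonneg.2 hw) (add_nonneg (sq_nonneg u) (sq_nonneg v))]

theorem smul_one_add_dotPauli (c : ℝ) (t : Fin 3 → ℝ) :
    (c : ℂ) • 1 + dotPauli t =
      !![((c + t 2 : ℝ) : ℂ), star ((t 0 : ℂ) + t 1 * Complex.I);
        (t 0 : ℂ) + t 1 * Complex.I, ((c - t 2 : ℝ) : ℂ)] := by
  ext i j
  fin_cases i <;> fin_cases j <;>
    simp [dotPauli, pauli, Fin.sum_univ_three, sub_eq_add_neg]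

theorem norm3_neg (t : Fin 3 → ℝ) : norm3 (-t) = norm3 t := by
  simp [norm3]

theorem posSemidef_smul_one_add_dotPauli {c : ℝ} {t : Fin 3 → ℝ} (h : norm3 t ≤ c) :
    ((c : ℂ) • 1 + dotPauli t).PosSemidef := by
  rw [norm3, Real.sqrt_le_iff, Fin.sum_univ_three] at h
  obtain ⟨hc, hsq⟩ := h
  have ht2 : t 2 ^ 2 ≤ c ^ 2 := by nlinarith [sq_nonneg (t 0), sq_nonneg (t 1)]
  obtain ⟨hlow, hupp⟩ := abs_le_of_sq_le_sq' ht2 hc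
  rw [smul_one_add_dotPauli]
  refine Matrix.posSemidef_fin_two_of_normSq_le (by linarith) (by linarith) ?_
  rw [Complex.normSq_add_mul_I]
  nlinarith

theorem smul_qubitState_sub_smul_qubitState (a b : ℝ) (r s : Fin 3 → ℝ) :
    (a : ℂ) • qubitState r - (b : ℂ) • qubitState s =
      (1 / 2 : ℂ) • (((a - b : ℝ) : ℂ) • 1 + dotPauli (fun k => a * r k - b * s k)) := by
  ext i j
  fin_cases i <;> fin_cases j <;>
    · simp [qubitState, dotPauli, pauli, Fin.sum_univ_three]
      ring

theorem posSemidef_smul_qubitState_sub_smul_qubitState {a b : ℝ} {r s : Fin 3 → ℝ}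
    (h : norm3 (fun k => a * r k - b * s k) ≤ a - b) :
    ((a : ℂ) • qubitState r - (b : ℂ) • qubitState s).PosSemidef := by
  rw [smul_qubitState_sub_smul_qubitState]
  exact (posSemidef_smul_one_add_dotPauli h).smul (by positivity)

theorem qubit_trivial_helstrom_general
    (r s : Fin 3 → ℝ)
    (π0 π1 : ℝ)
    (hgap : norm3 (fun k => π0 * r k - π1 * s k) < |π0 - π1|)
    (A : Matrix (Fin 2) (Fin 2) ℂ)
    (hAdef : A = (π0 : ℂ) • qubitState r - (π1 : ℂ) • qubitState s) :
    (π1 < π0 → A.PosSemidef) ∧ (π0 < π1 → (-A).PosSemidef) := by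
  subst hAdef
  refine ⟨fun h => ?_, fun h => ?_⟩
  · rw [abs_of_pos (sub_pos.2 h)] at hgap
    exact posSemidef_smul_qubitState_sub_smul_qubitState hgap.le
  · rw [abs_of_neg (sub_neg.2 h), neg_sub] at hgap
    have hswap : (fun k => π1 * s k - π0 * r k) = -fun k => π0 * r k - π1 * s k := by
      ext k; simp
    rw [neg_sub]
    refine posSemidef_smul_qubitState_sub_smul_qubitState ?_
    rw [hswap, norm3_neg]
    exact hgap.le

/-- If `‖π₀r − π₁s‖ < |π₀ − π₁|` then `π₀ρ − π₁σ'` is positive semidefinite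
(when `π₀ > π₁`) or negative semidefinite (when `π₀ < π₁`); in particular the
Helstrom projection is `0` or the identity. -/
theorem qubit_trivial_helstrom
    (r s : Fin 3 → ℝ) (hr : norm3 r ≤ 1) (hs : norm3 s ≤ 1)
    (π0 π1 : ℝ) (h0 : 0 ≤ π0) (h1 : 0 ≤ π1) (hsum : π0 + π1 = 1)
    (hgap : norm3 (fun k => π0 * r k - π1 * s k) < |π0 - π1|)
    (A : Matrix (Fin 2) (Fin 2) ℂ)
    (hAdef : A = (π0 : ℂ) • qubitState r - (π1 : ℂ) • qubitState s) :
    (π1 < π0 → A.PosSemidef) ∧ (π0 < π1 → (-A).PosSemidef) :=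
  qubit_trivial_helstrom_general r s π0 π1 hgap A hAdef
end

section
/- Let A be a Hermitian matrix on a finite-dimensional Hilbert space and let A₊ denote its positive part. Then for every operator P with 0 ≤ P ≤ I one has Tr[A P] ≤ Tr[A₊], with equality when P is the spectral projection of A onto its positive eigenvalues. Consequently, for density matrices ρ, σ and priors π₀ + π₁ = 1, every POVM element 0 ≤ P ≤ I satisfies π₀ Tr[ρ(I − P)] + π₁ Tr[σ P] ≥ (1/2)(1 − Tr|π₀ρ − π₁σ|), with equality for the Helstrom projection P* = [π₀ρ − π₁σ]₊. -/
/-!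
Write `A = A⁺ - A⁻` with `A⁺, A⁻ ≥ 0`; a positive semidefinite square root of `A²` must be
`CFC.abs A`, and `(A + |A|)/2 = A⁺`. For `0 ≤ P ≤ 1`,
`Tr A⁺ - Tr[AP] = Tr[A⁺(1 - P)] + Tr[A⁻P] ≥ 0`, since the trace of a product of positive
semidefinite matrices is nonnegative. A projection `P` commuting with `A` and splitting it as
`AP - (-A(1 - P))` into nonnegative parts with zero product realises `A⁺ = AP` by uniqueness of
the positive part. With `A = π₀ρ - π₁σ` the error probability equals `π₀ - Tr[AP]`, and
`Tr A⁺ = (π₀ - π₁ + Tr|A|)/2`.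
-/

open Matrix
open scoped ComplexOrder MatrixOrder

namespace Matrix

section RCLike

variable {m 𝕜 : Type*} [Fintype m] [DecidableEq m] [RCLike 𝕜] {A P : Matrix m m 𝕜}

lemma PosSemidef.trace_mul_nonneg {X Y : Matrix m m 𝕜} (hX : X.PosSemidef) (hY : Y.PosSemidef) :
    0 ≤ (X * Y).trace := by
  obtain ⟨B, rfl⟩ := CStarAlgebra.nonneg_iff_eq_star_mul_self.mp hY.nonneg
  rw [← Matrix.mul_assoc, trace_mul_cycle, star_eq_conjTranspose]
  exact (hX.mul_mul_conjTranspose_same B).trace_nonneg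

lemma IsHermitian.eq_cfcAbs_of_mul_self_eq {B : Matrix m m 𝕜} (hA : A.IsHermitian)
    (hB : B.PosSemidef) (hBA : B * B = A * A) : B = CFC.abs A := by
  refine (CFC.sq_eq_sq_iff B (CFC.abs A) hB.nonneg).mp ?_
  rw [CFC.abs_sq, sq, hBA, star_eq_conjTranspose, hA.eq]

lemma IsHermitian.half_smul_add_cfcAbs (hA : A.IsHermitian) :
    (1 / 2 : 𝕜) • (A + CFC.abs A) = A⁺ := by
  rw [add_comm, CFC.abs_add_self A hA.isSelfAdjoint, two_nsmul, ← two_smul 𝕜, smul_smul]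
  norm_num

lemma IsHermitian.trace_mul_le_trace_posPart (hA : A.IsHermitian) (hP : P.PosSemidef)
    (hP1 : (1 - P).PosSemidef) : (A * P).trace ≤ A⁺.trace := by
  have hpos := (CFC.posPart_nonneg A).posSemidef.trace_mul_nonneg hP1
  have hneg := (CFC.negPart_nonneg A).posSemidef.trace_mul_nonneg hP
  have hsplit : A⁺.trace - (A * P).trace = (A⁺ * (1 - P)).trace + (A⁻ * P).trace := by
    have hAP : A * P = A⁺ * P - A⁻ * P := by
      rw [← Matrix.sub_mul, CFC.posPart_sub_negPart A hA.isSelfAdjoint]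
    simp only [hAP, Matrix.mul_sub, Matrix.mul_one, trace_sub]
    abel
  exact sub_nonneg.mp (hsplit ▸ add_nonneg hpos hneg)

lemma posPart_eq_mul_of_idempotent_of_commute {Q : Matrix m m 𝕜} (hQ : Q * Q = Q) (hAQ : A * Q = Q * A)
    (hpos : (A * Q).PosSemidef) (hneg : (-(A * (1 - Q))).PosSemidef) : A⁺ = A * Q := by
  refine (CFC.posPart_negPart_unique (b := A * Q) (c := -(A * (1 - Q))) ?_ ?_
    hpos.nonneg hneg.nonneg).1
  · simp [Matrix.mul_sub]
  · rw [Matrix.mul_neg, Matrix.mul_assoc, ← Matrix.mul_assoc Q, ← hAQ, Matrix.mul_assoc A Q,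
      Matrix.mul_sub, hQ, Matrix.mul_one, sub_self, Matrix.mul_zero, Matrix.mul_zero, neg_zero]

end RCLike

lemma trace_mul_one_sub_add_trace_mul {m R : Type*} [Fintype m] [DecidableEq m] [CommRing R]
    {ρ σ : Matrix m m R} (hρ : ρ.trace = 1) (a b : R) (P : Matrix m m R) :
    a * (ρ * (1 - P)).trace + b * (σ * P).trace = a - ((a • ρ - b • σ) * P).trace := by
  simp only [Matrix.mul_sub, Matrix.sub_mul, Matrix.mul_one, smul_mul, trace_sub, trace_smul,
    hρ, smul_eq_mul]
  ring

end Matrix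

/-- For a Hermitian matrix `A` with positive part `A₊ = (A + |A|)/2`, every
`0 ≤ P ≤ I` satisfies `Tr[AP] ≤ Tr[A₊]`, with equality for the spectral
projection onto the positive eigenvalues.  Consequently the error probability of
any POVM element is bounded below by the Helstrom risk
`(1/2)(1 − Tr|π₀ρ − π₁σ|)`, with equality for the Helstrom projection. -/
theorem helstrom_bound
    {n : ℕ} (A : Matrix (Fin n) (Fin n) ℂ) (hA : A.IsHermitian)
    (Aabs : Matrix (Fin n) (Fin n) ℂ) (hAabs : Aabs.PosSemidef)
    (hAabsSq : Aabs * Aabs = A * A)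
    (Aplus : Matrix (Fin n) (Fin n) ℂ) (hAplus : Aplus = (1/2 : ℂ) • (A + Aabs)) :
    (∀ P : Matrix (Fin n) (Fin n) ℂ, P.PosSemidef → (1 - P).PosSemidef →
      ((A * P).trace).re ≤ (Aplus.trace).re) ∧
    (∀ Pst : Matrix (Fin n) (Fin n) ℂ, Pst.IsHermitian → Pst * Pst = Pst →
      A * Pst = Pst * A → (A * Pst).PosSemidef → (-(A * (1 - Pst))).PosSemidef →
      ((A * Pst).trace).re = (Aplus.trace).re) ∧
    (∀ (ρ σ : Matrix (Fin n) (Fin n) ℂ), ρ.PosSemidef → ρ.trace = 1 →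
      σ.PosSemidef → σ.trace = 1 → ∀ π0 π1 : ℝ, 0 ≤ π0 → 0 ≤ π1 → π0 + π1 = 1 →
      A = (π0 : ℂ) • ρ - (π1 : ℂ) • σ →
      (∀ P : Matrix (Fin n) (Fin n) ℂ, P.PosSemidef → (1 - P).PosSemidef →
        (1/2) * (1 - (Aabs.trace).re)
          ≤ π0 * ((ρ * (1 - P)).trace).re + π1 * ((σ * P).trace).re) ∧
      (∀ Pst : Matrix (Fin n) (Fin n) ℂ, Pst.IsHermitian → Pst * Pst = Pst →
        A * Pst = Pst * A → (A * Pst).PosSemidef → (-(A * (1 - Pst))).PosSemidef →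
        π0 * ((ρ * (1 - Pst)).trace).re + π1 * ((σ * Pst).trace).re
          = (1/2) * (1 - (Aabs.trace).re))) := by
  have hAplus_eq : Aplus = A⁺ := by
    rw [hAplus, hA.eq_cfcAbs_of_mul_self_eq hAabs hAabsSq, hA.half_smul_add_cfcAbs]
  have hle : ∀ P : Matrix (Fin n) (Fin n) ℂ, P.PosSemidef → (1 - P).PosSemidef →
      ((A * P).trace).re ≤ (Aplus.trace).re := fun P hP hP1 =>
    (Complex.le_def.mp (hAplus_eq ▸ hA.trace_mul_le_trace_posPart hP hP1)).1
  have heq : ∀ Pst : Matrix (Fin n) (Fin n) ℂ, Pst.IsHermitian → Pst * Pst = Pst →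
      A * Pst = Pst * A → (A * Pst).PosSemidef → (-(A * (1 - Pst))).PosSemidef →
      ((A * Pst).trace).re = (Aplus.trace).re := by
    intro Pst _ hidem hcomm hpos hneg
    rw [hAplus_eq, posPart_eq_mul_of_idempotent_of_commute hidem hcomm hpos hneg]
  refine ⟨hle, heq, fun ρ σ _ hρ _ hσ π0 π1 _ _ hπ hAρσ => ?_⟩
  have herror : ∀ P : Matrix (Fin n) (Fin n) ℂ,
      π0 * ((ρ * (1 - P)).trace).re + π1 * ((σ * P).trace).re = π0 - ((A * P).trace).re := by
    intro P
    simpa [hAρσ] using congrArg Complex.re (trace_mul_one_sub_add_trace_mul hρ (π0 : ℂ) π1 P)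
  have htrace : (Aplus.trace).re = (π0 - π1 + (Aabs.trace).re) / 2 := by
    have hhalf : (1 / 2 : ℂ) = ((1 / 2 : ℝ) : ℂ) := by norm_num
    rw [hAplus, hAρσ, trace_smul, trace_add, trace_sub, trace_smul, trace_smul, hρ, hσ, hhalf]
    simp only [smul_eq_mul, mul_one, Complex.re_ofReal_mul, Complex.add_re, Complex.sub_re,
      Complex.ofReal_re]
    ring
  exact ⟨fun P hP hP1 => by linarith [herror P, hle P hP hP1],
    fun Pst h₁ h₂ h₃ h₄ h₅ => by linarith [herror Pst, heq Pst h₁ h₂ h₃ h₄ h₅]⟩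
end

section
/- Let d₀ ∈ ℝ³ be nonzero, let z, ẑ ∈ ℝ³ with ẑ ⊥ d₀, and for n ≥ 1 define p = (d₀ + z/√n)/‖d₀ + z/√n‖ and p̂ = (d₀/‖d₀‖ + ẑ/(√n‖d₀‖))/‖d₀/‖d₀‖ + ẑ/(√n‖d₀‖)‖. Then n · (1/2) d · (p − p̂) → ‖z⊥ − ẑ‖²/(4‖d₀‖) as n → ∞, where d = d₀ + z/√n and z⊥ = z − d₀(d₀·z)/‖d₀‖² is the component of z orthogonal to d₀. -/
open Filter
open scoped RealInnerProductSpace Topology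

/-!
Put `s = 1/√n`, `u = d₀ + s z` and `v = d₀ + s ẑ`; the factor `1/‖d₀‖` does not change the
direction `p̂`, so `p̂ = v/‖v‖`. Then
`u·(u/‖u‖ − v/‖v‖) = (‖u‖²‖v‖² − (u·v)²) / (‖v‖ (‖u‖‖v‖ + u·v))`, and the Gram determinant in
the numerator is unchanged when `u` is replaced by `u − v = s (z − ẑ)`, so it equals
`s² (‖z − ẑ‖²‖v‖² − ((z − ẑ)·v)²)`. After dividing by `s² = 1/n` what remains is continuous at
`s = 0`, with value `(‖d₀‖²‖z − ẑ‖² − (d₀·(z − ẑ))²) / (2‖d₀‖³)`, and this is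
`‖z⊥ − ẑ‖² / (2‖d₀‖)` because `ẑ ⊥ d₀`.
-/

section InnerProductSpace

variable {E : Type*} [NormedAddCommGroup E] [InnerProductSpace ℝ E]

lemma inv_norm_smul_smul_of_pos {c : ℝ} (hc : 0 < c) (v : E) :
    ‖c • v‖⁻¹ • (c • v) = ‖v‖⁻¹ • v := by
  rw [norm_smul, Real.norm_of_nonneg hc.le, smul_smul, mul_inv_rev, inv_mul_cancel_right₀ hc.ne']

lemma inner_sub_inv_norm_smul_eq_div (u v : E) (hv : ‖v‖ ≠ 0)
    (huv : ‖u‖ * ‖v‖ + ⟪u, v⟫ ≠ 0) :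
    ⟪u, ‖u‖⁻¹ • u - ‖v‖⁻¹ • v⟫
      = (‖u‖ ^ 2 * ‖v‖ ^ 2 - ⟪u, v⟫ ^ 2) / (‖v‖ * (‖u‖ * ‖v‖ + ⟪u, v⟫)) := by
  rw [inner_sub_right, real_inner_smul_right, real_inner_smul_right, real_inner_self_eq_norm_sq]
  rcases eq_or_ne ‖u‖ 0 with hu | hu
  · rw [hu] at huv ⊢
    field_simp
    ring
  · field_simp
    ring

lemma norm_sq_mul_norm_sq_sub_inner_sq_sub_left (u v : E) :
    ‖u‖ ^ 2 * ‖v‖ ^ 2 - ⟪u, v⟫ ^ 2 = ‖u - v‖ ^ 2 * ‖v‖ ^ 2 - ⟪u - v, v⟫ ^ 2 := by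
  rw [norm_sub_sq_real, inner_sub_left, real_inner_self_eq_norm_sq]
  ring

lemma norm_sq_mul_norm_sub_proj_sq (d w : E) :
    ‖d‖ ^ 2 * ‖w - (⟪d, w⟫ / ‖d‖ ^ 2) • d‖ ^ 2 = ‖d‖ ^ 2 * ‖w‖ ^ 2 - ⟪d, w⟫ ^ 2 := by
  rcases eq_or_ne ‖d‖ 0 with hd | hd
  · simp [norm_eq_zero.mp hd]
  · rw [norm_sub_sq_real, norm_smul, real_inner_smul_right, Real.norm_eq_abs, mul_pow, sq_abs,
      real_inner_comm]
    field_simp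
    ring

lemma tendsto_inner_sub_inv_norm_smul (d z zh : E) (hd : d ≠ 0) :
    Tendsto (fun s : ℝ => s⁻¹ ^ 2 *
        ⟪d + s • z, ‖d + s • z‖⁻¹ • (d + s • z) - ‖d + s • zh‖⁻¹ • (d + s • zh)⟫)
      (𝓝[≠] 0) (𝓝 ((‖d‖ ^ 2 * ‖z - zh‖ ^ 2 - ⟪d, z - zh⟫ ^ 2) / (2 * ‖d‖ ^ 3))) := by
  set D : ℝ → ℝ := fun s =>
    ‖d + s • zh‖ * (‖d + s • z‖ * ‖d + s • zh‖ + ⟪d + s • z, d + s • zh⟫) with hD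
  set N : ℝ → ℝ := fun s => ‖z - zh‖ ^ 2 * ‖d + s • zh‖ ^ 2 - ⟪z - zh, d + s • zh⟫ ^ 2 with hN
  have hD0 : D 0 = 2 * ‖d‖ ^ 3 := by simp only [hD, zero_smul, add_zero, real_inner_self_eq_norm_sq]; ring
  have hD0_ne : D 0 ≠ 0 := by rw [hD0]; positivity
  have hND : Tendsto (fun s => N s / D s) (𝓝 0)
      (𝓝 ((‖d‖ ^ 2 * ‖z - zh‖ ^ 2 - ⟪d, z - zh⟫ ^ 2) / (2 * ‖d‖ ^ 3))) := by
    have hcont : ContinuousAt (fun s => N s / D s) 0 :=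
      ContinuousAt.div (by fun_prop) (by fun_prop) hD0_ne
    convert hcont.tendsto using 2
    simp only [hN, hD0, zero_smul, add_zero, real_inner_comm]
    ring
  refine (hND.mono_left nhdsWithin_le_nhds).congr' ?_
  have hD_ne : ∀ᶠ s in 𝓝 (0 : ℝ), D s ≠ 0 :=
    (show ContinuousAt D 0 by fun_prop).eventually_ne hD0_ne
  filter_upwards [self_mem_nhdsWithin, nhdsWithin_le_nhds hD_ne] with s (hs : s ≠ 0) hDs
  obtain ⟨hv, huv⟩ := mul_ne_zero_iff.mp hDs
  rw [inner_sub_inv_norm_smul_eq_div _ _ hv huv, norm_sq_mul_norm_sq_sub_inner_sq_sub_left,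
    show d + s • z - (d + s • zh) = s • (z - zh) by rw [smul_sub]; abel, norm_smul,
    real_inner_smul_left, Real.norm_eq_abs, mul_pow, sq_abs]
  simp only [hN, hD]
  field_simp

end InnerProductSpace

/-- The asymptotic expansion of the excess-risk term:
`n · (1/2) d·(p − p̂) → ‖z⊥ − ẑ‖²/(4‖d₀‖)` where
`p = (d₀ + z/√n)/‖d₀ + z/√n‖` and
`p̂ = (d₀/‖d₀‖ + ẑ/(√n‖d₀‖))/‖d₀/‖d₀‖ + ẑ/(√n‖d₀‖)‖`, for `ẑ ⊥ d₀`. -/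
theorem excess_risk_quadratic_limit
    (d0 z zh : EuclideanSpace ℝ (Fin 3)) (hd0 : d0 ≠ 0) (hzh : ⟪d0, zh⟫ = 0) :
    Tendsto (fun n : ℕ =>
      (n : ℝ) * (1/2) *
        ⟪d0 + (Real.sqrt n)⁻¹ • z,
          ‖d0 + (Real.sqrt n)⁻¹ • z‖⁻¹ • (d0 + (Real.sqrt n)⁻¹ • z)
          - ‖‖d0‖⁻¹ • d0 + (Real.sqrt n * ‖d0‖)⁻¹ • zh‖⁻¹ •
              (‖d0‖⁻¹ • d0 + (Real.sqrt n * ‖d0‖)⁻¹ • zh)⟫)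
      atTop
      (𝓝 (‖(z - (⟪d0, z⟫ / ‖d0‖^2) • d0) - zh‖^2 / (4 * ‖d0‖))) := by
  have hs : Tendsto (fun n : ℕ => (Real.sqrt n)⁻¹) atTop (𝓝[≠] 0) :=
    tendsto_nhdsWithin_iff.mpr
      ⟨tendsto_inv_atTop_zero.comp (Real.tendsto_sqrt_atTop.comp tendsto_natCast_atTop_atTop),
        (eventually_ge_atTop 1).mono fun n hn =>
          inv_ne_zero (Real.sqrt_ne_zero'.mpr (Nat.cast_pos.mpr hn))⟩
  have hperp : z - (⟪d0, z⟫ / ‖d0‖ ^ 2) • d0 - zh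
      = z - zh - (⟪d0, z - zh⟫ / ‖d0‖ ^ 2) • d0 := by
    rw [inner_sub_right, hzh, sub_zero, sub_right_comm]
  have hlimit : ‖z - (⟪d0, z⟫ / ‖d0‖ ^ 2) • d0 - zh‖ ^ 2 / (4 * ‖d0‖)
      = 1 / 2 * ((‖d0‖ ^ 2 * ‖z - zh‖ ^ 2 - ⟪d0, z - zh⟫ ^ 2) / (2 * ‖d0‖ ^ 3)) := by
    have hd0' : ‖d0‖ ≠ 0 := norm_ne_zero_iff.mpr hd0
    rw [hperp, ← norm_sq_mul_norm_sub_proj_sq]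
    field_simp
    ring
  rw [hlimit]
  refine (((tendsto_inner_sub_inv_norm_smul d0 z zh hd0).comp hs).const_mul (1 / 2)).congr
    fun n => ?_
  have hp : ‖d0‖⁻¹ • d0 + (Real.sqrt n * ‖d0‖)⁻¹ • zh
      = ‖d0‖⁻¹ • (d0 + (Real.sqrt n)⁻¹ • zh) := by
    rw [mul_inv, smul_add, smul_smul, mul_comm]
  simp only [Function.comp_apply, hp,
    inv_norm_smul_smul_of_pos (inv_pos.mpr (norm_pos_iff.mpr hd0)), inv_inv,
    Real.sq_sqrt n.cast_nonneg]
  ring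
end
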